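/- For every real α ≥ 1 and every z ∈ [−1,1], the series Σ_{m=0}^∞ κ₄ᵐ zᵐ converges and its sum equals [1 + η(b₀ + b₁z + b₂z²)²] · (b₀ + b₁z + b₂z²)^α. -/

import Mathlib

open Finset Filter

/-- `b₀ = (3α−2)/(2α)`. -/
noncomputable def b0 (α : ℝ) : ℝ := (3 * α - 2) / (2 * α)

/-- `b₁ = −2(α−1)/α`. -/
noncomputable def b1 (α : ℝ) : ℝ := -(2 * (α - 1)) / α

/-- `b₂ = (α−2)/(2α)`. -/
noncomputable def b2 (α : ℝ) : ℝ := (α - 2) / (2 * α)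

/-- `η = (3α−2)(α−2)(α−1)/(24α)`. -/
noncomputable def etaC (α : ℝ) : ℝ := (3 * α - 2) * (α - 2) * (α - 1) / (24 * α)

/-- Generalized binomial coefficient `C(β,k) = β(β−1)⋯(β−k+1)/k!`. -/
noncomputable def genBinom (β : ℝ) (k : ℕ) : ℝ :=
  (∏ i ∈ Finset.range k, (β - i)) / (Nat.factorial k)

/-- `κ₂ⁿ(β) = (−1)ⁿ b₀^β Σ_{k=0}^{n} (b₂/b₀)^k C(β,k) C(β,n−k)`,
where `b₀, b₂` are formed from the fixed parameter `α`. -/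
noncomputable def kappa2 (α β : ℝ) (n : ℕ) : ℝ :=
  (-1 : ℝ) ^ n * b0 α ^ β *
    ∑ k ∈ Finset.range (n + 1), (b2 α / b0 α) ^ k * genBinom β k * genBinom β (n - k)

/-- `κ₄ⁿ = κ₂ⁿ(α) + η κ₂ⁿ(α+2)`. -/
noncomputable def kappa4 (α : ℝ) (n : ℕ) : ℝ :=
  kappa2 α α n + etaC α * kappa2 α (α + 2) n



lemma genBinom_zero (β : ℝ) : genBinom β 0 = 1 := by simp [genBinom]

lemma genBinom_succ (β : ℝ) (k : ℕ) :
    genBinom β (k + 1) = genBinom β k * ((β - k) / (k + 1)) := by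
  have h1 : (Nat.factorial (k+1) : ℝ) = (k+1) * Nat.factorial k := by
    push_cast [Nat.factorial_succ]; ring
  have h2 : (Nat.factorial k : ℝ) ≠ 0 := Nat.cast_ne_zero.2 (Nat.factorial_ne_zero k)
  have h3 : ((k : ℝ) + 1) ≠ 0 := by positivity
  rw [genBinom, genBinom, Finset.prod_range_succ, h1, div_mul_div_comm]
  rw [mul_comm ((k:ℝ)+1) _]

lemma descPochhammer_smeval_real (r : ℝ) (n : ℕ) :
    Polynomial.smeval (descPochhammer ℤ n) r = ∏ i ∈ Finset.range n, (r - i) := by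
  induction n with
  | zero => simp [descPochhammer_zero, Polynomial.smeval_one]
  | succ n ih =>
    rw [descPochhammer_succ_right, Polynomial.smeval_mul, ih, Finset.prod_range_succ]
    congr 1
    rw [Polynomial.smeval_sub, Polynomial.smeval_X]
    simp [Polynomial.smeval_natCast]

lemma genBinom_eq_ringChoose (r : ℝ) (n : ℕ) : genBinom r n = Ring.choose r n := by
  have h := Ring.descPochhammer_eq_factorial_smul_choose r n
  rw [descPochhammer_smeval_real] at h
  have h2 : (Nat.factorial n : ℝ) ≠ 0 := Nat.cast_ne_zero.2 (Nat.factorial_ne_zero n)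
  rw [genBinom, h, nsmul_eq_mul]
  field_simp

/-- Chu–Vandermonde for real generalized binomials. -/
lemma genBinom_vandermonde (a b : ℝ) (n : ℕ) :
    ∑ k ∈ Finset.range (n + 1), genBinom a k * genBinom b (n - k) = genBinom (a + b) n := by
  have h := Ring.add_choose_eq (r := a) (s := b) n (Commute.all a b)
  rw [Finset.Nat.sum_antidiagonal_eq_sum_range_succ_mk] at h
  simp only [genBinom_eq_ringChoose]
  exact h.symm






lemma genBinom_pascal (γ : ℝ) (k : ℕ) :
    genBinom (γ + 1) (k + 1) = genBinom γ (k + 1) + genBinom γ k := by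
  simp only [genBinom_eq_ringChoose]
  rw [Ring.choose_succ_succ, add_comm]

/-- Alternating partial sums telescope. -/
lemma genBinom_alt_sum (β : ℝ) (n : ℕ) :
    ∑ k ∈ Finset.range (n + 1), (-1 : ℝ) ^ k * genBinom β k
      = (-1) ^ n * genBinom (β - 1) n := by
  induction n with
  | zero => simp [genBinom_zero]
  | succ n ih =>
    rw [Finset.sum_range_succ, ih]
    have hp : genBinom β (n + 1) = genBinom (β - 1) (n + 1) + genBinom (β - 1) n := by
      have := genBinom_pascal (β - 1) n
      rwa [sub_add_cancel] at this
    rw [hp]; ring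

lemma summable_abs_genBinom {β : ℝ} (hβ : 0 < β) : Summable (fun k => |genBinom β k|) := by
  set N := ⌈β⌉₊ with hNdef
  have hN1 : 1 ≤ N := Nat.one_le_ceil_iff.mpr hβ
  have hβN : β ≤ (N : ℝ) := Nat.le_ceil β
  have hNβ : (N : ℝ) < β + 1 := Nat.ceil_lt_add_one hβ.le
  -- sign lemma
  have h_sign : ∀ j : ℕ, (-1 : ℝ) ^ j * genBinom β (N + j) = |genBinom β (N + j)| := by
    intro j
    induction j with
    | zero =>
      have h0 : 0 ≤ genBinom β N := by
        apply div_nonneg _ (Nat.cast_nonneg _)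
        apply Finset.prod_nonneg
        intro i hi
        have hi' : (i : ℝ) ≤ (N : ℝ) - 1 := by
          have : i + 1 ≤ N := Finset.mem_range.mp hi
          have := Nat.cast_le (α := ℝ).mpr this
          push_cast at this; linarith
        have : (i : ℝ) < β := lt_of_le_of_lt hi' (by linarith)
        linarith
      simp [abs_of_nonneg h0]
    | succ j ih =>
      have hq : (β - (N + j : ℕ)) / ((N + j : ℕ) + 1 : ℝ) ≤ 0 := by
        apply div_nonpos_of_nonpos_of_nonneg
        · push_cast; have : (0:ℝ) ≤ (j:ℝ) := Nat.cast_nonneg j; linarith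
        · positivity
      have hstep := genBinom_succ β (N + j)
      calc (-1 : ℝ) ^ (j+1) * genBinom β (N + (j+1))
          = ((-1 : ℝ) ^ j * genBinom β (N + j)) *
              (-((β - (N + j : ℕ)) / ((N + j : ℕ) + 1 : ℝ))) := by
            rw [show N + (j+1) = (N + j) + 1 from rfl, hstep]; ring
        _ = |genBinom β (N + j)| * |(β - (N + j : ℕ)) / ((N + j : ℕ) + 1 : ℝ)| := by
            rw [ih, abs_of_nonpos hq]
        _ = |genBinom β (N + (j+1))| := by
            rw [← abs_mul, show N + (j+1) = (N + j) + 1 from rfl, hstep]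
  -- decreasing lemma for β - 1
  have h_dec : ∀ n, N - 1 ≤ n → |genBinom (β - 1) n| ≤ |genBinom (β - 1) (N - 1)| := by
    intro n hn
    induction n, hn using Nat.le_induction with
    | base => exact le_rfl
    | succ n hn ih =>
      rw [genBinom_succ, abs_mul]
      have hn' : (N : ℝ) - 1 ≤ (n : ℝ) := by
        have := Nat.cast_le (α := ℝ).mpr hn
        rwa [Nat.cast_sub hN1, Nat.cast_one] at this
      have h1 : |(β - 1 - n) / ((n : ℝ) + 1)| ≤ 1 := by
        rw [abs_div, abs_of_nonneg (by positivity : (0:ℝ) ≤ (n:ℝ)+1)]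
        rw [div_le_one (by positivity)]
        rw [abs_le]; constructor <;> [linarith; linarith]
      calc |genBinom (β-1) n| * |(β - 1 - n) / ((n : ℝ) + 1)|
          ≤ |genBinom (β-1) n| * 1 := by
            exact mul_le_mul_of_nonneg_left h1 (abs_nonneg _)
        _ ≤ |genBinom (β-1) (N-1)| := by rw [mul_one]; exact ih
  -- bound on blocks
  have h_block : ∀ m, ∑ j ∈ Finset.range m, |genBinom β (N + j)|
      ≤ 2 * |genBinom (β - 1) (N - 1)| := by
    intro m
    rcases m with _ | m
    · simp [abs_nonneg]
    · have key : ∑ j ∈ Finset.range (m+1), |genBinom β (N + j)|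
          = (-1 : ℝ)^N * ((∑ k ∈ Finset.range (N + (m+1)), (-1:ℝ)^k * genBinom β k)
              - ∑ k ∈ Finset.range N, (-1:ℝ)^k * genBinom β k) := by
        rw [Finset.sum_range_add (fun k => (-1:ℝ)^k * genBinom β k) N (m+1)]
        rw [add_sub_cancel_left, Finset.mul_sum]
        apply Finset.sum_congr rfl
        intro j _
        rw [← h_sign j, pow_add, ← mul_assoc, ← mul_assoc, ← pow_add, ← two_mul]
        rw [pow_mul]; norm_num
      rw [key]
      have hA1 : ∑ k ∈ Finset.range (N + (m+1)), (-1:ℝ)^k * genBinom β k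
          = (-1)^(N + m) * genBinom (β - 1) (N + m) := by
        have := genBinom_alt_sum β (N + m)
        rwa [show N + m + 1 = N + (m+1) from rfl] at this
      have hA2 : ∑ k ∈ Finset.range N, (-1:ℝ)^k * genBinom β k
          = (-1)^(N-1) * genBinom (β - 1) (N-1) := by
        have := genBinom_alt_sum β (N - 1)
        rwa [Nat.sub_add_cancel hN1] at this
      rw [hA1, hA2]
      have b1 : |(-1:ℝ)^(N+m) * genBinom (β-1) (N+m)| = |genBinom (β-1) (N+m)| := by
        rw [abs_mul, abs_pow, abs_neg, abs_one, one_pow, one_mul]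
      have b2 : |(-1:ℝ)^(N-1) * genBinom (β-1) (N-1)| = |genBinom (β-1) (N-1)| := by
        rw [abs_mul, abs_pow, abs_neg, abs_one, one_pow, one_mul]
      calc (-1:ℝ)^N * ((-1)^(N+m) * genBinom (β-1) (N+m) - (-1)^(N-1) * genBinom (β-1) (N-1))
          ≤ |(-1:ℝ)^N * ((-1)^(N+m) * genBinom (β-1) (N+m) - (-1)^(N-1) * genBinom (β-1) (N-1))| :=
            le_abs_self _
        _ ≤ |genBinom (β-1) (N+m)| + |genBinom (β-1) (N-1)| := by
            rw [abs_mul, abs_pow, abs_neg, abs_one, one_pow, one_mul]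
            refine (abs_sub _ _).trans ?_
            rw [b1, b2]
        _ ≤ 2 * |genBinom (β - 1) (N - 1)| := by
            have := h_dec (N + m) (by omega)
            linarith
  -- conclude
  apply summable_of_sum_range_le (c := (∑ k ∈ Finset.range N, |genBinom β k|)
      + 2 * |genBinom (β - 1) (N - 1)|) (fun n => abs_nonneg _)
  intro n
  calc ∑ k ∈ Finset.range n, |genBinom β k|
      ≤ ∑ k ∈ Finset.range (N + n), |genBinom β k| := by
        apply Finset.sum_le_sum_of_subset_of_nonneg
        · exact Finset.range_subset_range.mpr (by omega)
        · intro k _ _; exact abs_nonneg _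
    _ = ∑ k ∈ Finset.range N, |genBinom β k| + ∑ j ∈ Finset.range n, |genBinom β (N + j)| := by
        rw [Finset.sum_range_add]
    _ ≤ _ := by
        have := h_block n; linarith






/-- Majorant sequence. -/
noncomputable def mb (M : ℝ) (k : ℕ) : ℝ :=
  (∏ i ∈ Finset.range k, (M + i)) / (Nat.factorial k)

lemma mb_nonneg {M : ℝ} (hM : 0 ≤ M) (k : ℕ) : 0 ≤ mb M k := by
  apply div_nonneg _ (Nat.cast_nonneg _)
  exact Finset.prod_nonneg fun i _ => by positivity

lemma mb_succ (M : ℝ) (k : ℕ) : mb M (k + 1) = mb M k * ((M + k) / (k + 1)) := by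
  have h1 : (Nat.factorial (k+1) : ℝ) = (k+1) * Nat.factorial k := by
    push_cast [Nat.factorial_succ]; ring
  rw [mb, mb, Finset.prod_range_succ, h1, div_mul_div_comm, mul_comm ((k:ℝ)+1) _]

lemma abs_genBinom_le {β M : ℝ} (h : |β| ≤ M) (k : ℕ) : |genBinom β k| ≤ mb M k := by
  rw [genBinom, mb, abs_div, Nat.abs_cast, Finset.abs_prod]
  have hfact : (0:ℝ) < Nat.factorial k := Nat.cast_pos.mpr (Nat.factorial_pos k)
  rw [div_le_div_iff_of_pos_right hfact]
  apply Finset.prod_le_prod (fun i _ => abs_nonneg _)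
  intro i _
  calc |β - (i:ℝ)| = |β + (-(i:ℝ))| := by ring_nf
    _ ≤ |β| + |(-(i:ℝ))| := abs_add_le _ _
    _ = |β| + (i:ℝ) := by rw [abs_neg, Nat.abs_cast]
    _ ≤ M + i := by linarith

lemma summable_mb_mul {M x : ℝ} (hM : 0 ≤ M) (hx : |x| < 1) :
    Summable (fun k => mb M k * |x| ^ k) := by
  have hr : (1 + |x|) / 2 < 1 := by linarith
  apply summable_of_ratio_norm_eventually_le hr
  have h0 : Tendsto (fun n : ℕ => 1 / ((n : ℝ) + 1)) atTop (nhds 0) :=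
    tendsto_one_div_add_atTop_nhds_zero_nat
  have h1 : Tendsto (fun k : ℕ => (M + k) / ((k : ℝ) + 1) * |x|) atTop (nhds |x|) := by
    have h2 := (((h0.const_mul (M - 1)).const_add 1).mul_const |x|)
    have h3 : (fun n : ℕ => (1 + (M - 1) * (1 / ((n : ℝ) + 1))) * |x|)
        = fun k : ℕ => (M + k) / ((k : ℝ) + 1) * |x| := by
      funext k
      have hk : ((k : ℝ) + 1) ≠ 0 := by positivity
      have h5 : 1 + (M - 1) * (1 / ((k : ℝ) + 1)) = (M + k) / ((k : ℝ) + 1) := by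
        rw [eq_div_iff hk]; field_simp; ring
      rw [h5]
    rw [h3] at h2
    simpa using h2
  have h4 : ∀ᶠ k : ℕ in atTop, (M + k) / ((k : ℝ) + 1) * |x| < (1 + |x|) / 2 :=
    h1.eventually_lt_const (by linarith)
  filter_upwards [h4] with k hk
  have hnn : 0 ≤ mb M k * |x| ^ k := mul_nonneg (mb_nonneg hM k) (by positivity)
  have hnn1 : 0 ≤ mb M (k+1) * |x| ^ (k+1) := mul_nonneg (mb_nonneg hM (k+1)) (by positivity)
  rw [Real.norm_eq_abs, Real.norm_eq_abs, abs_of_nonneg hnn, abs_of_nonneg hnn1]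
  rw [mb_succ, pow_succ]
  calc mb M k * ((M + k) / ((k:ℝ) + 1)) * (|x| ^ k * |x|)
      = (mb M k * |x| ^ k) * ((M + k) / ((k:ℝ) + 1) * |x|) := by ring
    _ ≤ (mb M k * |x| ^ k) * ((1 + |x|) / 2) := by
        exact mul_le_mul_of_nonneg_left hk.le hnn
    _ = (1 + |x|) / 2 * (mb M k * |x| ^ k) := by ring

lemma summable_abs_genBinom_mul_pow (β x : ℝ) (hx : |x| < 1) :
    Summable (fun k => |genBinom β k * x ^ k|) := by
  apply Summable.of_nonneg_of_le (fun k => abs_nonneg _) _ (summable_mb_mul (abs_nonneg β) hx)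
  intro k
  rw [abs_mul, abs_pow]
  exact mul_le_mul_of_nonneg_right (abs_genBinom_le le_rfl k) (by positivity)

/-- The binomial series for `|x| < 1`. -/
lemma hasSum_genBinom_rpow_lt {x : ℝ} (hx : |x| < 1) (β : ℝ) :
    HasSum (fun k => genBinom β k * x ^ k) ((1 + x) ^ β) := by
  have h1x : (0 : ℝ) < 1 + x := by
    have := abs_lt.mp hx; linarith [this.1]
  set E : ℝ → ℝ := fun b => ∑' k, genBinom b k * x ^ k with hE
  have hnorm : ∀ b : ℝ, Summable (fun k => ‖genBinom b k * x ^ k‖) := by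
    intro b; simpa only [Real.norm_eq_abs] using summable_abs_genBinom_mul_pow b x hx
  have hsum : ∀ b : ℝ, Summable (fun k => genBinom b k * x ^ k) := fun b => (hnorm b).of_norm
  have hmul : ∀ a b : ℝ, E (a + b) = E a * E b := by
    intro a b
    rw [hE]
    simp only
    rw [tsum_mul_tsum_eq_tsum_sum_range_of_summable_norm (hnorm a) (hnorm b)]
    refine tsum_congr fun n => ?_
    refine Eq.symm ?_
    calc ∑ k ∈ Finset.range (n+1), (genBinom a k * x ^ k) * (genBinom b (n-k) * x ^ (n-k))
        = ∑ k ∈ Finset.range (n+1), (genBinom a k * genBinom b (n-k)) * x ^ n := by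
          apply Finset.sum_congr rfl
          intro k hk
          have hkn : k ≤ n := Nat.lt_succ_iff.mp (Finset.mem_range.mp hk)
          have hx2 : x ^ k * x ^ (n - k) = x ^ n := by
            rw [← pow_add]; congr 1; omega
          calc (genBinom a k * x ^ k) * (genBinom b (n-k) * x ^ (n-k))
              = (genBinom a k * genBinom b (n-k)) * (x ^ k * x ^ (n-k)) := by ring
            _ = (genBinom a k * genBinom b (n-k)) * x ^ n := by rw [hx2]
      _ = genBinom (a + b) n * x ^ n := by
          rw [← Finset.sum_mul, genBinom_vandermonde]
  have hE0 : E 0 = 1 := by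
    rw [hE]
    simp only
    rw [tsum_eq_single 0]
    · simp [genBinom_zero]
    · intro k hk
      rcases Nat.exists_eq_succ_of_ne_zero hk with ⟨j, rfl⟩
      have : genBinom 0 (j+1) = 0 := by
        rw [genBinom]
        rw [Finset.prod_eq_zero (Finset.mem_range.mpr (Nat.succ_pos j)) (by simp)]
        simp
      simp [this]
  have hE1 : E 1 = 1 + x := by
    rw [hE]
    simp only
    have hvanish : ∀ k ∉ ({0, 1} : Finset ℕ), genBinom 1 k * x ^ k = 0 := by
      intro k hk
      simp only [Finset.mem_insert, Finset.mem_singleton] at hk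
      push_neg at hk
      have : genBinom 1 k = 0 := by
        rw [genBinom, Finset.prod_eq_zero (i := 1) (Finset.mem_range.mpr (by omega)) (by simp)]
        simp
      simp [this]
    rw [tsum_eq_sum hvanish]
    rw [Finset.sum_insert (by simp), Finset.sum_singleton]
    simp [genBinom_zero, genBinom]
  have hpos : ∀ b : ℝ, 0 < E b := by
    intro b
    have hne : E b ≠ 0 := by
      intro h
      have h2 := hmul b (-b)
      rw [add_neg_cancel, hE0, h, zero_mul] at h2
      exact one_ne_zero h2
    have hsq : E b = E (b/2) * E (b/2) := by
      rw [← hmul]; norm_num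
    rcases (mul_self_nonneg (E (b/2))).lt_or_eq with h | h
    · rw [hsq]; exact h
    · exfalso; apply hne; rw [hsq, ← h]
  have hcont : Continuous E := by
    rw [continuous_iff_continuousAt]
    intro b0
    set M : ℝ := |b0| + 1 with hM
    have hM0 : 0 ≤ M := by positivity
    have hb : ∀ (k : ℕ) (b : ℝ), b ∈ Metric.ball b0 1 → ‖genBinom b k * x ^ k‖ ≤ mb M k * |x| ^ k := by
      intro k b hbmem
      have habs : |b| ≤ M := by
        have := Metric.mem_ball.mp hbmem
        rw [Real.dist_eq] at this
        calc |b| = |b0 + (b - b0)| := by ring_nf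
          _ ≤ |b0| + |b - b0| := abs_add_le _ _
          _ ≤ M := by rw [hM]; linarith
      rw [Real.norm_eq_abs, abs_mul, abs_pow]
      exact mul_le_mul (abs_genBinom_le habs k) le_rfl (by positivity) (mb_nonneg hM0 k)
    have hUnif := tendstoUniformlyOn_tsum (summable_mb_mul hM0 hx) hb
    have hContOn : ContinuousOn E (Metric.ball b0 1) := by
      apply hUnif.continuousOn
      refine Filter.Eventually.frequently (Filter.Eventually.of_forall fun t => ?_)
      apply Continuous.continuousOn
      apply continuous_finset_sum
      intro k _
      simp only [genBinom]
      exact ((continuous_finset_prod _ fun i _ =>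
        continuous_id.sub continuous_const).div_const _).mul continuous_const
    exact hContOn.continuousAt (Metric.ball_mem_nhds b0 one_pos)
  -- log is additive and continuous, hence linear
  set g : ℝ → ℝ := fun b => Real.log (E b) with hg
  have hgadd : ∀ a b : ℝ, g (a + b) = g a + g b := by
    intro a b
    rw [hg]
    simp only
    rw [hmul, Real.log_mul (hpos a).ne' (hpos b).ne']
  have hgcont : Continuous g := by
    rw [continuous_iff_continuousAt]
    intro b
    exact (Real.continuousAt_log (hpos b).ne').comp hcont.continuousAt
  set φ : ℝ →+ ℝ := AddMonoidHom.mk' g hgadd with hφ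
  have hlin : ∀ q : ℚ, g (q : ℝ) = (q : ℝ) * g 1 := by
    intro q
    have h1 := LinearMap.map_smul φ.toRatLinearMap q (1 : ℝ)
    simp only [AddMonoidHom.coe_toRatLinearMap, Rat.smul_def, mul_one] at h1
    exact h1
  have hgall : ∀ b : ℝ, g b = b * g 1 := by
    have hdense : Dense (Set.range ((↑) : ℚ → ℝ)) := Rat.denseRange_cast
    have heq : (fun b => g b) = fun b => b * g 1 := by
      apply Continuous.ext_on hdense hgcont (continuous_id.mul continuous_const)
      rintro y ⟨q, rfl⟩
      exact hlin q
    intro b; exact congrFun heq b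
  have hfinal : E β = (1 + x) ^ β := by
    have h1 : E β = Real.exp (g β) := (Real.exp_log (hpos β)).symm
    rw [h1, hgall β, hg]
    simp only
    rw [hE1, Real.rpow_def_of_pos h1x]
    rw [mul_comm]
  have := (hsum β).hasSum
  rwa [show (∑' k, genBinom β k * x ^ k) = E β from rfl, hfinal] at this

/-- The binomial series on the closed interval, for positive exponent. -/
lemma hasSum_genBinom_rpow {β : ℝ} (hβ : 0 < β) {x : ℝ} (hx : |x| ≤ 1) :
    HasSum (fun k => genBinom β k * x ^ k) ((1 + x) ^ β) := by
  have habs := summable_abs_genBinom hβ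
  have hxIcc : x ∈ Set.Icc (-1 : ℝ) 1 := by
    have := abs_le.mp hx; exact Set.mem_Icc.mpr ⟨this.1, this.2⟩
  have hsumm : Summable (fun k => |genBinom β k * x ^ k|) := by
    apply Summable.of_nonneg_of_le (fun k => abs_nonneg _) _ habs
    intro k
    rw [abs_mul, abs_pow]
    exact mul_le_of_le_one_right (abs_nonneg _) (pow_le_one₀ (abs_nonneg _) hx)
  set G : ℝ → ℝ := fun y => ∑' k, genBinom β k * y ^ k with hG
  have hbd : ∀ (k : ℕ) (y : ℝ), y ∈ Set.Icc (-1 : ℝ) 1 →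
      ‖genBinom β k * y ^ k‖ ≤ |genBinom β k| := by
    intro k y hy
    rw [Real.norm_eq_abs, abs_mul, abs_pow]
    refine mul_le_of_le_one_right (abs_nonneg _) (pow_le_one₀ (abs_nonneg _) ?_)
    rw [abs_le]; exact ⟨(Set.mem_Icc.mp hy).1, (Set.mem_Icc.mp hy).2⟩
  have hUnif := tendstoUniformlyOn_tsum habs hbd
  have hContOn : ContinuousOn G (Set.Icc (-1 : ℝ) 1) := by
    apply hUnif.continuousOn
    refine Filter.Eventually.frequently (Filter.Eventually.of_forall fun t => ?_)
    apply Continuous.continuousOn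
    apply continuous_finset_sum
    intro k _
    exact continuous_const.mul (continuous_pow k)
  have hGT : G x = (1 + x) ^ β := by
    have h1 : Tendsto G (nhdsWithin x (Set.Ioo (-1 : ℝ) 1)) (nhds (G x)) :=
      ((hContOn x hxIcc).mono Set.Ioo_subset_Icc_self)
    have hc : ContinuousAt (fun y : ℝ => (1 + y) ^ β) x := by
      have h3 : ContinuousAt (fun z : ℝ => z ^ β) (1 + x) :=
        Real.continuousAt_rpow_const _ _ (Or.inr hβ.le)
      exact h3.comp (continuousAt_const.add continuousAt_id)
    have h2 : Tendsto (fun y : ℝ => (1 + y) ^ β) (nhdsWithin x (Set.Ioo (-1 : ℝ) 1))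
        (nhds ((1 + x) ^ β)) := hc.continuousWithinAt
    have heqIoo : Set.EqOn G (fun y : ℝ => (1 + y) ^ β) (Set.Ioo (-1 : ℝ) 1) := by
      intro y hy
      exact (hasSum_genBinom_rpow_lt (abs_lt.mpr ⟨hy.1, hy.2⟩) β).tsum_eq
    have hne : (nhdsWithin x (Set.Ioo (-1 : ℝ) 1)).NeBot := by
      rw [← mem_closure_iff_nhdsWithin_neBot, closure_Ioo (by norm_num : (-1 : ℝ) ≠ 1)]
      exact hxIcc
    have h1' : Tendsto (fun y : ℝ => (1 + y) ^ β) (nhdsWithin x (Set.Ioo (-1 : ℝ) 1))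
        (nhds (G x)) := h1.congr' (Filter.eventuallyEq_of_mem self_mem_nhdsWithin heqIoo)
    exact tendsto_nhds_unique h1' h2
  have hs2 := hsumm.of_abs.hasSum
  rwa [show (∑' k, genBinom β k * x ^ k) = G x from rfl, hGT] at hs2

lemma Q_nonneg {α : ℝ} (hα : 1 ≤ α) {z : ℝ} (hz : |z| ≤ 1) :
    0 ≤ b0 α + b1 α * z + b2 α * z ^ 2 := by
  have hα0 : (0 : ℝ) < α := by linarith
  have h3α : (0 : ℝ) < 3 * α - 2 := by linarith
  have hb0pos : 0 < b0 α := div_pos h3α (by positivity)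
  have hb2le : |b2 α| ≤ b0 α := by
    rw [b2, b0, abs_div, abs_of_pos (by positivity : (0:ℝ) < 2 * α),
      div_le_div_iff_of_pos_right (by positivity : (0:ℝ) < 2 * α), abs_le]
    constructor <;> linarith
  have hcle : |b2 α / b0 α| ≤ 1 := by
    rw [abs_div, abs_of_pos hb0pos, div_le_one hb0pos]
    exact hb2le
  have hcz : |b2 α / b0 α * z| ≤ 1 := by
    rw [abs_mul]
    exact mul_le_one₀ hcle (abs_nonneg _) hz
  have h1mz : 0 ≤ 1 - z := by linarith [(abs_le.mp hz).2]
  have h1mcz : 0 ≤ 1 - b2 α / b0 α * z := by linarith [(abs_le.mp hcz).2]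
  have hfac : b0 α + b1 α * z + b2 α * z ^ 2
      = b0 α * ((1 - b2 α / b0 α * z) * (1 - z)) := by
    have hane : (α : ℝ) ≠ 0 := hα0.ne'
    have h3ne : (3 * α - 2 : ℝ) ≠ 0 := h3α.ne'
    rw [b0, b1, b2]
    field_simp
    ring
  rw [hfac]
  exact mul_nonneg hb0pos.le (mul_nonneg h1mcz h1mz)

lemma summable_norm_genBinom_mul_pow {β : ℝ} (hβ : 0 < β) {x : ℝ} (hx : |x| ≤ 1) :
    Summable (fun k => ‖genBinom β k * x ^ k‖) := by
  apply Summable.of_nonneg_of_le (fun k => norm_nonneg _) _ (summable_abs_genBinom hβ)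
  intro k
  rw [Real.norm_eq_abs, abs_mul, abs_pow]
  exact mul_le_of_le_one_right (abs_nonneg _) (pow_le_one₀ (abs_nonneg _) hx)

lemma hasSum_kappa2_mul_pow {α : ℝ} (hα : 1 ≤ α) {β : ℝ} (hβ : 0 < β) {z : ℝ}
    (hz : |z| ≤ 1) :
    HasSum (fun n => kappa2 α β n * z ^ n)
      ((b0 α + b1 α * z + b2 α * z ^ 2) ^ β) := by
  have hα0 : (0 : ℝ) < α := by linarith
  have h2α : (2 * α : ℝ) ≠ 0 := by positivity
  have h3α : (0 : ℝ) < 3 * α - 2 := by linarith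
  have hb0pos : 0 < b0 α := div_pos h3α (by positivity)
  set c : ℝ := b2 α / b0 α with hc_eq
  have hb2le : |b2 α| ≤ b0 α := by
    rw [b2, b0, abs_div, abs_of_pos (by positivity : (0:ℝ) < 2 * α),
      div_le_div_iff_of_pos_right (by positivity : (0:ℝ) < 2 * α), abs_le]
    constructor <;> linarith
  have hcle : |c| ≤ 1 := by
    rw [hc_eq, abs_div, abs_of_pos hb0pos, div_le_one hb0pos]
    exact hb2le
  have hcz : |c * z| ≤ 1 := by
    rw [abs_mul]
    exact mul_le_one₀ hcle (abs_nonneg _) hz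
  have h1mz : 0 ≤ 1 - z := by linarith [(abs_le.mp hz).2]
  have h1mcz : 0 ≤ 1 - c * z := by linarith [(abs_le.mp hcz).2]
  have h1 : HasSum (fun k => genBinom β k * (-(c * z)) ^ k) ((1 + -(c * z)) ^ β) :=
    hasSum_genBinom_rpow hβ (by rwa [abs_neg])
  have h2 : HasSum (fun k => genBinom β k * (-z) ^ k) ((1 + -z) ^ β) :=
    hasSum_genBinom_rpow hβ (by rwa [abs_neg])
  have hn1 : Summable (fun k => ‖genBinom β k * (-(c * z)) ^ k‖) :=
    summable_norm_genBinom_mul_pow hβ (by rwa [abs_neg])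
  have hn2 : Summable (fun k => ‖genBinom β k * (-z) ^ k‖) :=
    summable_norm_genBinom_mul_pow hβ (by rwa [abs_neg])
  have hcauchy := hasSum_sum_range_mul_of_summable_norm hn1 hn2
  rw [h1.tsum_eq, h2.tsum_eq] at hcauchy
  have hcauchy2 := hcauchy.mul_left (b0 α ^ β)
  -- identify the terms
  have hterm : ∀ n : ℕ, b0 α ^ β * (∑ k ∈ Finset.range (n + 1),
        (genBinom β k * (-(c * z)) ^ k) * (genBinom β (n - k) * (-z) ^ (n - k)))
      = kappa2 α β n * z ^ n := by
    intro n
    have hin : ∀ k ∈ Finset.range (n + 1),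
        (genBinom β k * (-(c * z)) ^ k) * (genBinom β (n - k) * (-z) ^ (n - k))
        = (c ^ k * genBinom β k * genBinom β (n - k)) * ((-1 : ℝ) ^ n * z ^ n) := by
      intro k hk
      have hkn : k ≤ n := Nat.lt_succ_iff.mp (Finset.mem_range.mp hk)
      have e1 : (-(c * z)) ^ k = (-z) ^ k * c ^ k := by
        rw [show -(c * z) = (-z) * c by ring, mul_pow]
      have e2 : (-z : ℝ) ^ k * (-z) ^ (n - k) = (-z) ^ n := by
        rw [← pow_add]; congr 1; omega
      calc (genBinom β k * (-(c * z)) ^ k) * (genBinom β (n - k) * (-z) ^ (n - k))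
          = (c ^ k * genBinom β k * genBinom β (n - k)) * ((-z) ^ k * (-z) ^ (n - k)) := by
            rw [e1]; ring
        _ = (c ^ k * genBinom β k * genBinom β (n - k)) * ((-1 : ℝ) ^ n * z ^ n) := by
            rw [e2, neg_pow]
    rw [Finset.sum_congr rfl hin, ← Finset.sum_mul, kappa2]
    rw [← hc_eq]
    ring
  -- identify the value
  have hval : b0 α ^ β * ((1 + -(c * z)) ^ β * (1 + -z) ^ β)
      = (b0 α + b1 α * z + b2 α * z ^ 2) ^ β := by
    rw [show (1 + -(c * z)) = 1 - c * z by ring, show (1 + -z) = 1 - z by ring]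
    rw [← Real.mul_rpow h1mcz h1mz, ← Real.mul_rpow hb0pos.le (by positivity)]
    congr 1
    have hane : (α : ℝ) ≠ 0 := hα0.ne'
    have h3ne : (3 * α - 2 : ℝ) ≠ 0 := h3α.ne'
    rw [hc_eq, b0, b1, b2]
    field_simp
    ring
  rw [hval] at hcauchy2
  rw [show (fun n => kappa2 α β n * z ^ n)
      = fun n => b0 α ^ β * (∑ k ∈ Finset.range (n + 1),
        (genBinom β k * (-(c * z)) ^ k) * (genBinom β (n - k) * (-z) ^ (n - k)))
    from funext fun n => (hterm n).symm]
  exact hcauchy2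

/-- For every `α ≥ 1` and `z ∈ [−1,1]`, the series `Σ κ₄ᵐ zᵐ` converges with sum
`[1 + η(b₀ + b₁z + b₂z²)²](b₀ + b₁z + b₂z²)^α`. -/
theorem kappa4_series_tendsto (α : ℝ) (hα : 1 ≤ α) (z : ℝ) (hz : z ∈ Set.Icc (-1 : ℝ) 1) :
    Tendsto (fun N => ∑ m ∈ Finset.range N, kappa4 α m * z ^ m) atTop
      (nhds ((1 + etaC α * (b0 α + b1 α * z + b2 α * z ^ 2) ^ 2) *
        (b0 α + b1 α * z + b2 α * z ^ 2) ^ α)) := by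
  have hα0 : (0 : ℝ) < α := by linarith
  have hzabs : |z| ≤ 1 := abs_le.mpr ⟨hz.1, hz.2⟩
  set Q : ℝ := b0 α + b1 α * z + b2 α * z ^ 2 with hQdef
  have hQ0 : 0 ≤ Q := Q_nonneg hα hzabs
  have hs1 : HasSum (fun n => kappa2 α α n * z ^ n) (Q ^ α) :=
    hasSum_kappa2_mul_pow hα hα0 hzabs
  have hs2 : HasSum (fun n => kappa2 α (α + 2) n * z ^ n) (Q ^ (α + 2)) :=
    hasSum_kappa2_mul_pow hα (by linarith) hzabs
  have hsum := hs1.add (hs2.mul_left (etaC α))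
  have hfe : (fun n => kappa2 α α n * z ^ n + etaC α * (kappa2 α (α + 2) n * z ^ n))
      = fun n => kappa4 α n * z ^ n := by
    funext n; rw [kappa4]; ring
  rw [hfe] at hsum
  have hval : Q ^ α + etaC α * Q ^ (α + 2)
      = (1 + etaC α * Q ^ 2) * Q ^ α := by
    have h1 : Q ^ (α + 2) = Q ^ α * Q ^ 2 := by
      rw [Real.rpow_add' hQ0 (by linarith : α + 2 ≠ 0)]
      congr 1
      rw [show (2 : ℝ) = ((2 : ℕ) : ℝ) by norm_num, Real.rpow_natCast]
    rw [h1]; ring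
  rw [hval] at hsum
  exact hsum.tendsto_sum_nat
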